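/- arXiv:2601.12398 — 2 statements merged into one kernel-verified Lean document; each statement's English description precedes it below -/
import Mathlib

section
/- Let d_i, d_j : ℝ^d → ℝ be convex and L-smooth, let β ∈ (0, 1/L), let c₁, c₂ > 0, and set θ₁ = min{β(1 − βL), c₁} and θ₂ = min{((1/β) − L)/2, c₂}. Fix w_i, w_j ∈ ℝ^d and suppose the pair (u, v) ∈ ℝ^d × ℝ^d satisfies either (a) the safe-guard condition d_i(u) + d_j(v) − d_i(w_i) − d_j(w_j) ≤ min{ −c₁‖∇d_i(w_i) − ∇d_j(w_j)‖², −c₂(‖u − w_i‖² + ‖v − w_j‖²) }, or (b) the gradient step u = w_i − β(∇d_i(w_i) − ∇d_j(w_j)) and v = w_j − β(∇d_j(w_j) − ∇d_i(w_i)). Then d_i(u) + d_j(v) − d_i(w_i) − d_j(w_j) ≤ min{ −θ₁‖∇d_i(w_i) − ∇d_j(w_j)‖², −θ₂(‖u − w_i‖² + ‖v − w_j‖²) }. -/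
open InnerProductSpace intervalIntegral

lemma descent_lemma {E : Type*} [NormedAddCommGroup E] [InnerProductSpace ℝ E] [CompleteSpace E]
    (L : ℝ) (hL : 0 ≤ L) (f : E → ℝ) (hf : Differentiable ℝ f)
    (hlip : ∀ x y, ‖gradient f x - gradient f y‖ ≤ L * ‖x - y‖) (x y : E) :
    f y ≤ f x + ⟪gradient f x, y - x⟫_ℝ + L / 2 * ‖y - x‖ ^ 2 := by
  set g := gradient f with hg
  have hgc : Continuous g := by
    have : LipschitzWith (Real.toNNReal L) g := by
      apply LipschitzWith.of_dist_le_mul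
      intro a b
      simp only [dist_eq_norm]
      calc ‖g a - g b‖ ≤ L * ‖a - b‖ := hlip a b
        _ ≤ (Real.toNNReal L) * ‖a - b‖ := by
            gcongr; exact (Real.coe_toNNReal L hL).ge
    exact this.continuous
  set c : ℝ → E := fun t => x + t • (y - x) with hc
  have hcc : Continuous c := by fun_prop
  have hderiv : ∀ t : ℝ, HasDerivAt (fun t => f (c t)) ⟪g (c t), y - x⟫_ℝ t := by
    intro t
    have h1 : HasDerivAt c (y - x) t := by
      have := ((hasDerivAt_id t).smul_const (y - x)).const_add x
      simpa [hc] using this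
    have h2 : HasFDerivAt f (toDual ℝ E (g (c t))) (c t) :=
      (hf (c t)).hasGradientAt.hasFDerivAt
    have := h2.comp_hasDerivAt t h1
    simp only [toDual_apply_apply] at this; exact this
  have hcont : Continuous fun t : ℝ => ⟪g (c t), y - x⟫_ℝ :=
    (hgc.comp hcc).inner continuous_const
  have hint : ∫ t in (0:ℝ)..1, ⟪g (c t), y - x⟫_ℝ = f y - f x := by
    rw [intervalIntegral.integral_eq_sub_of_hasDerivAt (fun t _ => hderiv t)
      (hcont.intervalIntegrable 0 1)]
    simp [hc]
  have hbound : ∫ t in (0:ℝ)..1, ⟪g (c t), y - x⟫_ℝ ≤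
      ∫ t in (0:ℝ)..1, (⟪g x, y - x⟫_ℝ + L * t * ‖y - x‖ ^ 2) := by
    apply intervalIntegral.integral_mono_on (by norm_num) (hcont.intervalIntegrable 0 1)
    · exact Continuous.intervalIntegrable (by fun_prop) 0 1
    · intro t ht
      have h1 : ⟪g (c t), y - x⟫_ℝ - ⟪g x, y - x⟫_ℝ = ⟪g (c t) - g x, y - x⟫_ℝ := by
        rw [inner_sub_left]
      have h2 : ⟪g (c t) - g x, y - x⟫_ℝ ≤ ‖g (c t) - g x‖ * ‖y - x‖ :=
        real_inner_le_norm _ _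
      have h3 : ‖g (c t) - g x‖ ≤ L * (t * ‖y - x‖) := by
        have := hlip (c t) x
        simp only [hc] at this
        calc ‖g (x + t • (y - x)) - g x‖ ≤ L * ‖x + t • (y - x) - x‖ := this
          _ = L * (|t| * ‖y - x‖) := by rw [add_sub_cancel_left, norm_smul]; simp
          _ = L * (t * ‖y - x‖) := by rw [abs_of_nonneg ht.1]
      nlinarith [norm_nonneg (y - x), mul_nonneg (mul_nonneg hL ht.1) (norm_nonneg (y-x))]
  have hval : ∫ t in (0:ℝ)..1, (⟪g x, y - x⟫_ℝ + L * t * ‖y - x‖ ^ 2) =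
      ⟪g x, y - x⟫_ℝ + L / 2 * ‖y - x‖ ^ 2 := by
    rw [intervalIntegral.integral_add intervalIntegrable_const
      (Continuous.intervalIntegrable (by fun_prop : Continuous fun t : ℝ => L * t * ‖y - x‖ ^ 2) 0 1)]
    simp only [intervalIntegral.integral_const]
    rw [show (fun t : ℝ => L * t * ‖y - x‖ ^ 2) = fun t : ℝ => (L * ‖y - x‖ ^ 2) * t by
      ext t; ring]
    rw [intervalIntegral.integral_const_mul, integral_id]
    simp only [smul_eq_mul]; ring
  linarith [hbound.trans_eq hval, hint.symm.le, hint.le]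

/-- the safe-guard scheme of FDGM-AA always yields sufficient
descent (Lemma 1 of the paper). -/
theorem fdgm_aa_safeguard_descent
    {d : ℕ} (L β c₁ c₂ θ₁ θ₂ : ℝ) (hL : 0 < L) (hβ : 0 < β) (hβL : β < 1 / L)
    (hc₁ : 0 < c₁) (hc₂ : 0 < c₂)
    (hθ₁ : θ₁ = min (β * (1 - β * L)) c₁)
    (hθ₂ : θ₂ = min ((1 / β - L) / 2) c₂)
    (di dj : EuclideanSpace ℝ (Fin d) → ℝ)
    (hdi_conv : ConvexOn ℝ Set.univ di) (hdj_conv : ConvexOn ℝ Set.univ dj)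
    (hdi_diff : Differentiable ℝ di) (hdj_diff : Differentiable ℝ dj)
    (hdi_lip : ∀ x y, ‖gradient di x - gradient di y‖ ≤ L * ‖x - y‖)
    (hdj_lip : ∀ x y, ‖gradient dj x - gradient dj y‖ ≤ L * ‖x - y‖)
    (wi wj u v : EuclideanSpace ℝ (Fin d))
    (hcase :
      (di u + dj v - di wi - dj wj ≤
          min (-c₁ * ‖gradient di wi - gradient dj wj‖ ^ 2)
            (-c₂ * (‖u - wi‖ ^ 2 + ‖v - wj‖ ^ 2)))
      ∨ (u = wi - β • (gradient di wi - gradient dj wj)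
          ∧ v = wj - β • (gradient dj wj - gradient di wi))) :
    di u + dj v - di wi - dj wj ≤
      min (-θ₁ * ‖gradient di wi - gradient dj wj‖ ^ 2)
        (-θ₂ * (‖u - wi‖ ^ 2 + ‖v - wj‖ ^ 2)) := by
  set g := gradient di wi - gradient dj wj with hgdef
  have hN : (0:ℝ) ≤ ‖g‖ ^ 2 := by positivity
  have hS : (0:ℝ) ≤ ‖u - wi‖ ^ 2 + ‖v - wj‖ ^ 2 := by positivity
  have hθ₁c : θ₁ ≤ c₁ := hθ₁ ▸ min_le_right _ _
  have hθ₂c : θ₂ ≤ c₂ := hθ₂ ▸ min_le_right _ _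
  rcases hcase with hsafe | ⟨hu, hv⟩
  · refine le_trans hsafe (min_le_min ?_ ?_) <;> nlinarith
  · -- gradient step case
    have hdiu : di u ≤ di wi + ⟪gradient di wi, u - wi⟫_ℝ + L / 2 * ‖u - wi‖ ^ 2 :=
      descent_lemma L hL.le di hdi_diff hdi_lip wi u
    have hdjv : dj v ≤ dj wj + ⟪gradient dj wj, v - wj⟫_ℝ + L / 2 * ‖v - wj‖ ^ 2 :=
      descent_lemma L hL.le dj hdj_diff hdj_lip wj v
    have huw : u - wi = -(β • g) := by rw [hu]; abel
    have hvw : v - wj = β • g := by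
      rw [hv, hgdef]; module
    have hnu : ‖u - wi‖ ^ 2 = β ^ 2 * ‖g‖ ^ 2 := by
      rw [huw, norm_neg, norm_smul, Real.norm_eq_abs, abs_of_pos hβ]; ring
    have hnv : ‖v - wj‖ ^ 2 = β ^ 2 * ‖g‖ ^ 2 := by
      rw [hvw, norm_smul, Real.norm_eq_abs, abs_of_pos hβ]; ring
    have hinner : ⟪gradient di wi, u - wi⟫_ℝ + ⟪gradient dj wj, v - wj⟫_ℝ
        = -β * ‖g‖ ^ 2 := by
      rw [huw, hvw, inner_neg_right, real_inner_smul_right, real_inner_smul_right]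
      have h5 : ⟪gradient di wi, g⟫_ℝ - ⟪gradient dj wj, g⟫_ℝ = ‖g‖ ^ 2 := by
        rw [← inner_sub_left, ← hgdef, real_inner_self_eq_norm_sq]
      linear_combination (-β) * h5
    have hkey : di u + dj v - di wi - dj wj ≤ -(β * (1 - β * L)) * ‖g‖ ^ 2 := by
      calc di u + dj v - di wi - dj wj ≤
          (⟪gradient di wi, u - wi⟫_ℝ + ⟪gradient dj wj, v - wj⟫_ℝ)
            + L / 2 * ‖u - wi‖ ^ 2 + L / 2 * ‖v - wj‖ ^ 2 := by linarith
        _ = -(β * (1 - β * L)) * ‖g‖ ^ 2 := by rw [hinner, hnu, hnv]; ring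
    have hθ₁b : θ₁ ≤ β * (1 - β * L) := hθ₁ ▸ min_le_left _ _
    have hθ₂b : θ₂ ≤ (1 / β - L) / 2 := hθ₂ ▸ min_le_left _ _
    have h2 : (1 / β - L) / 2 * (‖u - wi‖ ^ 2 + ‖v - wj‖ ^ 2) = β * (1 - β * L) * ‖g‖ ^ 2 := by
      rw [hnu, hnv]; field_simp; ring
    refine le_min (hkey.trans ?_) (hkey.trans ?_)
    · linarith [mul_le_mul_of_nonneg_right hθ₁b hN]
    · linarith [mul_le_mul_of_nonneg_right hθ₂b hS, h2]
end

section
/- Let V = {1, …, n} be a finite node set and E a set of unordered pairs {i, j} ⊆ V with i ≠ j. For each i ∈ V let d_i : ℝ^d → ℝ be convex and differentiable and let w_i ∈ ℝ^d. Let h_{ij} = h_{ji} > 0 for each {i, j} ∈ E satisfy Σ_{j : {i,j} ∈ E} h_{ij} ≤ 1 for every i. Suppose for each edge {i, j} ∈ E there are points w_{ij}, w_{ji} ∈ ℝ^d satisfying, for some θ₁ > 0, d_i(w_{ij}) + d_j(w_{ji}) − d_i(w_i) − d_j(w_j) ≤ −θ₁‖∇d_i(w_i) − ∇d_j(w_j)‖².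 Define the updated points w_i⁺ = (1 − Σ_{j : {i,j} ∈ E} h_{ij}) w_i + Σ_{j : {i,j} ∈ E} h_{ij} w_{ij}. Then Σ_{i ∈ V} d_i(w_i⁺) − Σ_{i ∈ V} d_i(w_i) ≤ −θ₁ Σ_{{i,j} ∈ E} h_{ij} ‖∇d_i(w_i) − ∇d_j(w_j)‖². In particular, Σ_{i ∈ V} d_i(w_i⁺) ≤ Σ_{i ∈ V} d_i(w_i). -/
open Finset in
/-- aggregating sufficiently-descending pairwise updates over the
edges of a graph decreases the total dual objective (the key descent
inequality behind FDGM-AA). The sum over unordered edges `{i,j} ∈ E` of a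
symmetric edge quantity is written as half the sum over ordered adjacent
pairs. -/
theorem fdgm_aa_aggregate_descent
    {n d : ℕ} (G : SimpleGraph (Fin n)) [DecidableRel G.Adj]
    (df : Fin n → EuclideanSpace ℝ (Fin d) → ℝ)
    (hconv : ∀ i, ConvexOn ℝ Set.univ (df i))
    (hdiff : ∀ i, Differentiable ℝ (df i))
    (w : Fin n → EuclideanSpace ℝ (Fin d))
    (h : Fin n → Fin n → ℝ)
    (hsymm : ∀ i j, h i j = h j i)
    (hpos : ∀ i j, G.Adj i j → 0 < h i j)
    (hrow : ∀ i, ∑ j ∈ G.neighborFinset i, h i j ≤ 1)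
    (θ₁ : ℝ) (hθ₁ : 0 < θ₁)
    (we : Fin n → Fin n → EuclideanSpace ℝ (Fin d))
    (hdesc : ∀ i j, G.Adj i j →
      df i (we i j) + df j (we j i) - df i (w i) - df j (w j) ≤
        -θ₁ * ‖gradient (df i) (w i) - gradient (df j) (w j)‖ ^ 2)
    (wplus : Fin n → EuclideanSpace ℝ (Fin d))
    (hupd : ∀ i, wplus i =
      (1 - ∑ j ∈ G.neighborFinset i, h i j) • w i
        + ∑ j ∈ G.neighborFinset i, h i j • we i j) :
    ((∑ i, df i (wplus i)) - ∑ i, df i (w i) ≤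
      -θ₁ * ((1 / 2) * ∑ i, ∑ j ∈ G.neighborFinset i,
        h i j * ‖gradient (df i) (w i) - gradient (df j) (w j)‖ ^ 2))
    ∧ (∑ i, df i (wplus i)) ≤ ∑ i, df i (w i) := by
  have hne : ∀ i j, j ∈ G.neighborFinset i → 0 ≤ h i j := fun i j hj =>
    (hpos i j ((SimpleGraph.mem_neighborFinset G i j).mp hj)).le
  -- Jensen step
  have jensen : ∀ i, df i (wplus i) ≤
      (1 - ∑ j ∈ G.neighborFinset i, h i j) * df i (w i)
        + ∑ j ∈ G.neighborFinset i, h i j * df i (we i j) := by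
    intro i
    rw [hupd i]
    have := (hconv i).map_add_sum_le (t := G.neighborFinset i)
      (w := h i) (p := we i) (v := 1 - ∑ j ∈ G.neighborFinset i, h i j)
      (q := w i) (hne i) (by ring) (fun j _ => Set.mem_univ _)
      (by linarith [hrow i]) (Set.mem_univ _)
    simpa using this
  -- sum of Jensen over i
  have step1 : (∑ i, df i (wplus i)) - ∑ i, df i (w i) ≤
      ∑ i, ∑ j ∈ G.neighborFinset i, h i j * (df i (we i j) - df i (w i)) := by
    rw [sub_le_iff_le_add, ← Finset.sum_add_distrib]
    apply Finset.sum_le_sum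
    intro i _
    have e : ∑ j ∈ G.neighborFinset i, h i j * (df i (we i j) - df i (w i))
        = (∑ j ∈ G.neighborFinset i, h i j * df i (we i j))
          - (∑ j ∈ G.neighborFinset i, h i j) * df i (w i) := by
      rw [Finset.sum_mul, ← Finset.sum_sub_distrib]
      exact Finset.sum_congr rfl fun j _ => by ring
    calc df i (wplus i) ≤ (1 - ∑ j ∈ G.neighborFinset i, h i j) * df i (w i)
        + ∑ j ∈ G.neighborFinset i, h i j * df i (we i j) := jensen i
      _ = (∑ j ∈ G.neighborFinset i, h i j * (df i (we i j) - df i (w i)))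
          + df i (w i) := by rw [e]; ring
  -- swap lemma
  have swap : ∀ (f : Fin n → Fin n → ℝ),
      (∑ i, ∑ j ∈ G.neighborFinset i, f i j)
        = ∑ i, ∑ j ∈ G.neighborFinset i, f j i := by
    intro f
    simp only [SimpleGraph.neighborFinset_eq_filter, Finset.sum_filter]
    rw [Finset.sum_comm]
    exact Finset.sum_congr rfl fun i _ => Finset.sum_congr rfl fun j _ =>
      if_congr (G.adj_comm j i) rfl rfl
  set A : Fin n → Fin n → ℝ := fun i j => df i (we i j) - df i (w i) with hA
  set N : Fin n → Fin n → ℝ := fun i j =>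
    ‖gradient (df i) (w i) - gradient (df j) (w j)‖ ^ 2 with hN
  have hsw : (∑ i, ∑ j ∈ G.neighborFinset i, h i j * A i j)
      = ∑ i, ∑ j ∈ G.neighborFinset i, h i j * A j i := by
    rw [swap (fun i j => h i j * A i j)]
    exact Finset.sum_congr rfl fun i _ => Finset.sum_congr rfl fun j _ => by
      rw [hsymm j i]
  have e1 : (∑ i, ∑ j ∈ G.neighborFinset i, h i j * A i j)
      = (1/2) * ∑ i, ∑ j ∈ G.neighborFinset i, h i j * (A i j + A j i) := by
    have expand : (∑ i, ∑ j ∈ G.neighborFinset i, h i j * (A i j + A j i))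
        = (∑ i, ∑ j ∈ G.neighborFinset i, h i j * A i j)
          + ∑ i, ∑ j ∈ G.neighborFinset i, h i j * A j i := by
      simp only [mul_add, Finset.sum_add_distrib]
    rw [expand, ← hsw]; ring
  have key : (∑ i, ∑ j ∈ G.neighborFinset i, h i j * A i j)
      ≤ -θ₁ * ((1 / 2) * ∑ i, ∑ j ∈ G.neighborFinset i, h i j * N i j) := by
    have hX : (∑ i, ∑ j ∈ G.neighborFinset i, h i j * (A i j + A j i))
        ≤ ∑ i, ∑ j ∈ G.neighborFinset i, h i j * (-θ₁ * N i j) := by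
      apply Finset.sum_le_sum; intro i _
      apply Finset.sum_le_sum; intro j hj
      have hadj := (SimpleGraph.mem_neighborFinset G i j).mp hj
      have hd := hdesc i j hadj
      apply mul_le_mul_of_nonneg_left _ (hne i j hj)
      simp only [hA, hN]; linarith [hd]
    have e2 : (∑ i, ∑ j ∈ G.neighborFinset i, h i j * (-θ₁ * N i j))
        = -θ₁ * ∑ i, ∑ j ∈ G.neighborFinset i, h i j * N i j := by
      rw [Finset.mul_sum]
      exact Finset.sum_congr rfl fun i _ => by
        rw [Finset.mul_sum]
        exact Finset.sum_congr rfl fun j _ => by ring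
    rw [e1]
    calc (1/2) * ∑ i, ∑ j ∈ G.neighborFinset i, h i j * (A i j + A j i)
        ≤ (1/2) * (-θ₁ * ∑ i, ∑ j ∈ G.neighborFinset i, h i j * N i j) := by
          apply mul_le_mul_of_nonneg_left _ (by norm_num)
          exact hX.trans_eq e2
      _ = -θ₁ * ((1/2) * ∑ i, ∑ j ∈ G.neighborFinset i, h i j * N i j) := by ring
  have main := step1.trans key
  refine ⟨main, ?_⟩
  have hnn : 0 ≤ (1 / 2 : ℝ) * ∑ i, ∑ j ∈ G.neighborFinset i, h i j * N i j := by
    apply mul_nonneg (by norm_num)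
    apply Finset.sum_nonneg; intro i _
    apply Finset.sum_nonneg; intro j hj
    exact mul_nonneg (hne i j hj) (by simp only [hN]; positivity)
  nlinarith [main]
end
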